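/- arXiv:2604.17057 — 8 statements merged into one kernel-verified Lean document; each statement's English description precedes it below -/
import Mathlib

section
/- If two increment arrays t and u of size s satisfy t ≈ u (u is a circular shift of t), then ⋃_{i=1}^{n} {C(i, t)} = ⋃_{i=1}^{n} {C(i, u)}; that is, t and u generate exactly the same collection of coalitions when the starting agent ranges over all of {1, …, n}. -/
namespace NDCA

/-- `t` is an increment array (IA) of size `s` for `n` agents:
a tuple of non-negative integers of length `s` with sum `n - s`. -/
def IsIA (n s : ℕ) (t : List ℕ) : Prop :=
  t.length = s ∧ t.sum = n - s

/-- Cumulative increment `φ_i` (1-indexed): `φ_1 = 0`, and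
`φ_i = Σ_{k=0}^{i-2} (t_k + 1)` for `2 ≤ i`. -/
def phi (t : List ℕ) (i : ℕ) : ℕ := (t.take (i - 1)).sum + (i - 1)

/-- The coalition generated by increment array `t` from starting agent `x`:
`C(x,t) = { ((x - 1 + φ_i) mod n) + 1 : 1 ≤ i ≤ s }`. -/
def coal (n x : ℕ) (t : List ℕ) : Finset ℕ :=
  (Finset.Icc 1 t.length).image (fun i => (x - 1 + phi t i) % n + 1)

/-- The collection of coalitions generated by `t` as the starting agent
ranges over `{1, …, n}`. -/
def gen (n : ℕ) (t : List ℕ) : Finset (Finset ℕ) :=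
  (Finset.Icc 1 n).image (fun x => coal n x t)

/-- `u` is a circular shift of `t`: `u = ⟨t_k, …, t_{s-1}, t_0, …, t_{k-1}⟩`
for some `0 ≤ k ≤ s - 1`. -/
def ShiftEquiv (t u : List ℕ) : Prop :=
  ∃ k, k < t.length ∧ u = t.rotate k

/-- `p` is a period of `t`: `1 ≤ p`, `p ∣ |t|`, and `t` consists of
`|t|/p` identical copies of its first `p` entries. -/
def IsPeriodOf (t : List ℕ) (p : ℕ) : Prop :=
  1 ≤ p ∧ p ∣ t.length ∧ t = (List.replicate (t.length / p) (t.take p)).flatten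

/-- The period `π(t)`: the smallest `p` that is a period of `t`. -/
noncomputable def period (t : List ℕ) : ℕ := sInf {p | IsPeriodOf t p}

lemma phi_append_single (t' : List ℕ) (a : ℕ) {i : ℕ} (hi : i ≤ t'.length + 1) :
    phi (t' ++ [a]) i = phi t' i := by
  unfold phi
  rw [List.take_append_of_le_length (by omega)]

lemma phi_cons (a : ℕ) (t' : List ℕ) {i : ℕ} (hi : 1 ≤ i) :
    phi (a :: t') (i + 1) = a + phi t' i + 1 := by
  unfold phi
  obtain ⟨j, rfl⟩ := Nat.exists_eq_add_of_le hi
  simp [List.take_cons, Nat.add_comm 1 j]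
  omega

lemma phi_one (t : List ℕ) : phi t 1 = 0 := by simp [phi]

lemma phi_last (t' : List ℕ) (a : ℕ) :
    phi (t' ++ [a]) (t'.length + 1) = t'.sum + t'.length := by
  unfold phi
  simp

/-- Key shifting lemma for a single rotation. -/
lemma coal_shift (n a : ℕ) (t' : List ℕ) (hn : 1 ≤ n)
    (hsum : a + t'.sum + (t'.length + 1) = n) (z : ℕ) :
    coal n ((z + a + 1) % n + 1) (t' ++ [a]) = coal n (z + 1) (a :: t') := by
  have hlen : (t' ++ [a]).length = t'.length + 1 := by simp
  have hlen2 : (a :: t').length = t'.length + 1 := by simp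
  have key : ∀ i, 1 ≤ i → i ≤ t'.length + 1 →
      ((z + a + 1) % n + phi (t' ++ [a]) i) % n
        = (z + phi (a :: t') (if i = t'.length + 1 then 1 else i + 1)) % n := by
    intro i h1 h2
    rw [Nat.mod_add_mod]
    by_cases hcase : i = t'.length + 1
    · subst hcase
      simp only [if_pos rfl, phi_one, phi_last, Nat.add_zero]
      have : z + a + 1 + (t'.sum + t'.length) = z + n := by omega
      rw [this, Nat.add_mod_right]
      simp [phi_one]
    · rw [if_neg hcase, phi_append_single t' a h2, phi_cons a t' h1]
      congr 1
      omega
  ext m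
  simp only [coal, Finset.mem_image, Finset.mem_Icc, hlen, hlen2,
    Nat.add_sub_cancel]
  constructor
  · rintro ⟨i, ⟨h1, h2⟩, rfl⟩
    refine ⟨if i = t'.length + 1 then 1 else i + 1, ⟨?_, ?_⟩, ?_⟩
    · split <;> omega
    · split <;> omega
    · rw [← key i h1 h2]
  · rintro ⟨j, ⟨h1, h2⟩, rfl⟩
    by_cases hj : j = 1
    · subst hj
      refine ⟨t'.length + 1, ⟨by omega, le_refl _⟩, ?_⟩
      rw [key _ (by omega) (le_refl _), if_pos rfl]
    · refine ⟨j - 1, ⟨by omega, by omega⟩, ?_⟩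
      rw [key _ (by omega) (by omega)]
      rw [if_neg (by omega)]
      congr 2

lemma gen_rotate_one (n a : ℕ) (t' : List ℕ) (hn : 1 ≤ n)
    (hsum : a + t'.sum + (t'.length + 1) = n) :
    gen n (t' ++ [a]) = gen n (a :: t') := by
  ext C
  simp only [gen, Finset.mem_image, Finset.mem_Icc]
  constructor
  · rintro ⟨x, ⟨hx1, hx2⟩, rfl⟩
    set d := (a + 1) % n with hd
    have hdn : d < n := Nat.mod_lt _ (by omega)
    set z := (x - 1 + (n - d)) % n with hz
    have hzn : z < n := Nat.mod_lt _ (by omega)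
    refine ⟨z + 1, ⟨by omega, by omega⟩, ?_⟩
    rw [← coal_shift n a t' hn hsum z]
    congr 2
    set q := (a + 1) / n with hqdef
    have hq : n * q + d = a + 1 := by rw [hqdef, hd]; exact Nat.div_add_mod _ _
    have e1 : z + a + 1 = (x - 1 + (n - d)) % n + (a + 1) := by omega
    rw [e1, Nat.mod_add_mod]
    have e2 : x - 1 + (n - d) + (a + 1) = x - 1 + n + n * q := by omega
    rw [e2, Nat.add_mul_mod_self_left, Nat.add_mod_right,
      Nat.mod_eq_of_lt (by omega)]
    omega
  · rintro ⟨y, ⟨hy1, hy2⟩, rfl⟩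
    refine ⟨(y - 1 + a + 1) % n + 1, ⟨by omega, ?_⟩, ?_⟩
    · have := Nat.mod_lt (y - 1 + a + 1) (show 0 < n by omega)
      omega
    · rw [coal_shift n a t' hn hsum (y - 1)]
      congr 1
      omega

lemma gen_rotate (n : ℕ) (hn : 1 ≤ n) :
    ∀ (k : ℕ) (t : List ℕ), 1 ≤ t.length → t.sum + t.length = n →
      gen n (t.rotate k) = gen n t := by
  intro k
  induction k with
  | zero => intro t _ _; rw [List.rotate_zero]
  | succ k ih =>
    intro t ht1 ht2
    obtain ⟨a, t', rfl⟩ : ∃ a t', t = a :: t' := by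
      cases t with
      | nil => simp at ht1
      | cons a t' => exact ⟨a, t', rfl⟩
    have h1 : (a :: t').rotate (k + 1) = (t' ++ [a]).rotate k := by
      rw [List.rotate_cons_succ]
    rw [h1, ih (t' ++ [a]) (by simp) (by simp at ht2 ⊢; omega)]
    exact gen_rotate_one n a t' hn
      (by simp only [List.sum_cons, List.length_cons] at ht2; omega)

/-- If two increment arrays `t` and `u` of size `s` satisfy
`t ≈ u`, then they generate exactly the same collection of coalitions as the
starting agent ranges over `{1,…,n}`. -/
theorem stmt3 (n s : ℕ) (hn : 1 ≤ n) (hs1 : 1 ≤ s) (hsn : s ≤ n)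
    (t u : List ℕ) (ht : IsIA n s t) (hu : IsIA n s u)
    (hequiv : ShiftEquiv t u) :
    gen n t = gen n u := by
  obtain ⟨k, hk, rfl⟩ := hequiv
  obtain ⟨hlen, hsum⟩ := ht
  exact (gen_rotate n hn k t (by omega) (by omega)).symm

end NDCA
end

section
/- Let t be an increment array of size s and let C = C(x, t) for some agent x ∈ {1, …, n}, with elements of C listed in increasing order as x_1 < x_2 < ⋯ < x_s. Then there exists an increment array u with u ≈ t such that C(x_1, u) = C and, moreover, x_i = x_1 + φ_i(u) for every 1 ≤ i ≤ s, where φ_i(u) are the cumulative increments of u; that is, u generates C from its minimum element in strictly increasing order with no modular wrap-around. -/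
namespace NDCA

lemma sum_take_add (t : List ℕ) (a b : ℕ) :
    (t.take (a + b)).sum = (t.take a).sum + ((t.drop a).take b).sum := by
  rw [List.take_add, List.sum_append]

lemma sum_take_drop (t : List ℕ) (a : ℕ) :
    (t.take a).sum + (t.drop a).sum = t.sum := by
  rw [← List.sum_append, List.take_append_drop]

lemma phi_strictMono (t : List ℕ) {i j : ℕ} (hi : 1 ≤ i) (hij : i < j) :
    phi t i < phi t j := by
  unfold phi
  have h : (t.take ((i-1) + ((j-1)-(i-1)))).sum
      = (t.take (i-1)).sum + ((t.drop (i-1)).take ((j-1)-(i-1))).sum := sum_take_add ..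
  have e : (i-1) + ((j-1)-(i-1)) = j - 1 := by omega
  rw [e] at h
  omega

lemma phi_le (t : List ℕ) (i : ℕ) : phi t i ≤ t.sum + (i - 1) := by
  unfold phi
  have := sum_take_drop t (i-1)
  omega

lemma phi_rotate_lo (t : List ℕ) {k i : ℕ} (hi : 1 ≤ i) (h : k + i ≤ t.length) :
    phi t (k + 1) + phi (t.rotate k) i = phi t (k + i) := by
  have hk : k ≤ t.length := by omega
  have h1 : (t.rotate k).take (i-1) = (t.drop k).take (i-1) := by
    rw [List.rotate_eq_drop_append_take hk, List.take_append]
    have h0 : i - 1 - (t.drop k).length = 0 := by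
      rw [List.length_drop]; omega
    rw [h0, List.take_zero, List.append_nil]
  have hs : (t.take (k + (i-1))).sum = (t.take k).sum + ((t.drop k).take (i-1)).sum :=
    sum_take_add ..
  unfold phi
  rw [h1]
  have e1 : k + 1 - 1 = k := by omega
  have e2 : k + (i - 1) = k + i - 1 := by omega
  rw [e1]
  rw [e2] at hs
  omega

lemma phi_rotate_hi (t : List ℕ) {k i : ℕ} (hk : k < t.length) (hi : 1 ≤ i)
    (hi2 : i ≤ t.length) (h : t.length < k + i) :
    phi t (k + 1) + phi (t.rotate k) i = t.sum + t.length + phi t (k + i - t.length) := by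
  have hk' : k ≤ t.length := le_of_lt hk
  have h1 : (t.rotate k).take (i-1)
      = t.drop k ++ (t.take k).take (i - 1 - (t.length - k)) := by
    rw [List.rotate_eq_drop_append_take hk', List.take_append]
    rw [List.length_drop]
    congr 1
    exact List.take_of_length_le (by rw [List.length_drop]; omega)
  have hsplit := sum_take_drop t k
  have h2 : (t.take k).take (i - 1 - (t.length - k)) = t.take (i - 1 - (t.length - k)) := by
    rw [List.take_take]
    congr 1
    omega
  unfold phi
  rw [h1, List.sum_append, h2]
  have e1 : k + 1 - 1 = k := by omega
  have e2 : k + i - t.length - 1 = i - 1 - (t.length - k) := by omega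
  rw [e1, e2]
  omega

/-- Let `t` be an increment array of size `s` and
`C = C(x, t)` with elements `x_1 < x_2 < ⋯ < x_s` (here `c i = x_i`).
There is an increment array `u ≈ t` with `C(x_1, u) = C` and
`x_i = x_1 + φ_i(u)` for every `1 ≤ i ≤ s`: `u` generates `C` from its
minimum element in strictly increasing order with no modular wrap-around. -/
theorem stmt4 (n s : ℕ) (hn : 1 ≤ n) (hs1 : 1 ≤ s) (hsn : s ≤ n)
    (t : List ℕ) (ht : IsIA n s t)
    (x : ℕ) (hx : x ∈ Finset.Icc 1 n)
    (C : Finset ℕ) (hC : C = coal n x t) (hcard : C.card = s)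
    (c : ℕ → ℕ)
    (hmono : ∀ i j, 1 ≤ i → i < j → j ≤ s → c i < c j)
    (himg : C = (Finset.Icc 1 s).image c) :
    ∃ u, IsIA n s u ∧ ShiftEquiv t u ∧ coal n (c 1) u = C ∧
      ∀ i, 1 ≤ i → i ≤ s → c i = c 1 + phi u i := by
  obtain ⟨htl, hts⟩ := ht
  have hsum : t.sum + s = n := by omega
  obtain ⟨m, hmP, hmin⟩ := Finset.exists_min_image (Finset.Icc 1 s)
    (fun j => (x - 1 + phi t j) % n) ⟨1, Finset.mem_Icc.mpr ⟨le_refl 1, hs1⟩⟩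
  simp only [Finset.mem_Icc] at hmP
  set k := m - 1 with hkdef
  have hmk : m = k + 1 := by omega
  -- membership in C
  have hmemC : ∀ j, 1 ≤ j → j ≤ s → (x - 1 + phi t j) % n + 1 ∈ C := by
    intro j h1 h2
    rw [hC]
    simp only [coal, Finset.mem_image]
    exact ⟨j, Finset.mem_Icc.mpr ⟨h1, by omega⟩, rfl⟩
  -- Claim A
  have claimA : ∀ i, 1 ≤ i → i ≤ s → ∃ j, 1 ≤ j ∧ j ≤ s ∧
      ((x - 1 + phi t m) % n + phi (t.rotate k) i) % n = (x - 1 + phi t j) % n := by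
    intro i hi1 his
    by_cases hcase : k + i ≤ s
    · refine ⟨k + i, by omega, hcase, ?_⟩
      have hlo := phi_rotate_lo t hi1 (show k + i ≤ t.length by omega)
      rw [Nat.mod_add_mod, hmk, Nat.add_assoc, hlo]
    · refine ⟨k + i - s, by omega, by omega, ?_⟩
      have hhi := phi_rotate_hi t (show k < t.length by omega) hi1
        (show i ≤ t.length by omega) (show t.length < k + i by omega)
      rw [htl] at hhi
      have hkey : phi t (k + 1) + phi (t.rotate k) i = n + phi t (k + i - s) := by omega
      rw [Nat.mod_add_mod, hmk, Nat.add_assoc, hkey,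
        show x - 1 + (n + phi t (k + i - s)) = x - 1 + phi t (k + i - s) + n by omega,
        Nat.add_mod_right]
  -- Claim B : no wrap-around
  have hphiu_le : ∀ i, 1 ≤ i → i ≤ s → phi (t.rotate k) i ≤ n - 1 := by
    intro i h1 h2
    have hle := phi_le (t.rotate k) i
    rw [(t.rotate_perm k).sum_eq] at hle
    omega
  have hpm_lt : (x - 1 + phi t m) % n < n := Nat.mod_lt _ (by omega)
  have claimB : ∀ i, 1 ≤ i → i ≤ s →
      (x - 1 + phi t m) % n + phi (t.rotate k) i < n := by
    intro i h1 h2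
    obtain ⟨j, hj1, hj2, hj3⟩ := claimA i h1 h2
    have hge := hmin j (Finset.mem_Icc.mpr ⟨hj1, hj2⟩)
    have hle := hphiu_le i h1 h2
    by_contra hcon
    push_neg at hcon
    have hmod : ((x - 1 + phi t m) % n + phi (t.rotate k) i) % n
        = (x - 1 + phi t m) % n + phi (t.rotate k) i - n := by
      rw [Nat.mod_eq_sub_mod hcon, Nat.mod_eq_of_lt (by omega)]
    omega
  -- the increasing enumeration coincides with c
  have key : ∀ i : Fin s, c (i.1 + 1) = (x - 1 + phi t m) % n + phi (t.rotate k) (i.1 + 1) + 1 := by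
    have hmemf : ∀ i : Fin s, c (i.1 + 1) ∈ C := by
      intro i
      rw [himg]
      exact Finset.mem_image.mpr ⟨i.1 + 1, Finset.mem_Icc.mpr ⟨by omega, by omega⟩, rfl⟩
    have hmemg : ∀ i : Fin s,
        (x - 1 + phi t m) % n + phi (t.rotate k) (i.1 + 1) + 1 ∈ C := by
      intro i
      obtain ⟨j, hj1, hj2, hj3⟩ := claimA (i.1 + 1) (by omega) (by omega)
      have hB := claimB (i.1 + 1) (by omega) (by omega)
      rw [Nat.mod_eq_of_lt hB] at hj3
      rw [hj3]
      exact hmemC j hj1 hj2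
    have hsf : StrictMono (fun i : Fin s => c (i.1 + 1)) := by
      intro a b hab
      have hab' : a.1 < b.1 := hab
      exact hmono (a.1 + 1) (b.1 + 1) (by omega) (by omega) (by omega)
    have hsg : StrictMono
        (fun i : Fin s => (x - 1 + phi t m) % n + phi (t.rotate k) (i.1 + 1) + 1) := by
      intro a b hab
      have hab' : a.1 < b.1 := hab
      have := phi_strictMono (t.rotate k) (show 1 ≤ a.1 + 1 by omega)
        (show a.1 + 1 < b.1 + 1 by omega)
      dsimp only
      omega
    have h1 := Finset.orderEmbOfFin_unique hcard hmemf hsf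
    have h2 := Finset.orderEmbOfFin_unique hcard hmemg hsg
    intro i
    have := congrFun (h1.trans h2.symm) i
    simpa using this
  have hceq : ∀ i, 1 ≤ i → i ≤ s →
      c i = (x - 1 + phi t m) % n + phi (t.rotate k) i + 1 := by
    intro i h1 h2
    have := key ⟨i - 1, by omega⟩
    simpa [Nat.sub_add_cancel h1] using this
  have hc1 : c 1 = (x - 1 + phi t m) % n + 1 := by
    have := hceq 1 le_rfl hs1
    rw [phi_one] at this
    omega
  refine ⟨t.rotate k, ⟨?_, ?_⟩, ⟨k, by omega, rfl⟩, ?_, ?_⟩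
  · rw [List.length_rotate, htl]
  · rw [(t.rotate_perm k).sum_eq, hts]
  · rw [hC, show coal n x t = (Finset.Icc 1 s).image c from hC ▸ himg]
    simp only [coal, List.length_rotate, htl]
    apply Finset.image_congr
    intro i hi
    simp only [Finset.mem_coe, Finset.mem_Icc] at hi
    have hce := hceq i hi.1 hi.2
    have hB := claimB i hi.1 hi.2
    have hc1' : c 1 - 1 = (x - 1 + phi t m) % n := by omega
    dsimp only
    rw [hc1', Nat.mod_eq_of_lt hB]
    omega
  · intro i h1 h2
    have := hceq i h1 h2
    omega

end NDCA
end

section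
/- If two increment arrays t and u of size s are not equivalent (t ≉ u, i.e., u is not a circular shift of t), then the collections of coalitions they generate are disjoint: ⋃_{i=1}^{n} {C(i, t)} ∩ ⋃_{i=1}^{n} {C(i, u)} = ∅. -/
namespace NDCA

lemma phi_succ_succ (t : List ℕ) (i : ℕ) (h : i < t.length) :
    phi t (i + 2) = phi t (i + 1) + (t[i] + 1) := by
  simp only [phi, show i + 2 - 1 = i + 1 from rfl, show i + 1 - 1 = i from rfl]
  rw [List.sum_take_succ t i h]
  omega

lemma phi_strictMono_s5 (t : List ℕ) : StrictMono (fun i => phi t (i + 1)) := by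
  apply strictMono_nat_of_lt_succ
  intro i
  by_cases h : i < t.length
  · rw [show i + 1 + 1 = i + 2 from rfl, phi_succ_succ t i h]; omega
  · simp only [phi, Nat.add_sub_cancel]
    rw [List.take_of_length_le (by omega), List.take_of_length_le (by omega)]
    omega

lemma phi_length (t : List ℕ) : phi t (t.length + 1) = t.sum + t.length := by
  simp [phi]

lemma mem_coal {n x y : ℕ} {t : List ℕ} :
    y ∈ coal n x t ↔ ∃ i < t.length, y = (x - 1 + phi t (i + 1)) % n + 1 := by
  simp only [coal, Finset.mem_image, Finset.mem_Icc]
  constructor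
  · rintro ⟨j, ⟨h1, h2⟩, rfl⟩
    exact ⟨j - 1, by omega, by rw [Nat.sub_add_cancel h1]⟩
  · rintro ⟨i, hi, rfl⟩
    exact ⟨i + 1, ⟨by omega, by omega⟩, rfl⟩

noncomputable def nextGap (n : ℕ) (C : Finset ℕ) (a : ℕ) : ℕ :=
  sInf {d | 1 ≤ d ∧ (a + d) % n + 1 ∈ C}

noncomputable def gaps (n : ℕ) (C : Finset ℕ) : ℕ → ℕ → List ℕ
  | _, 0 => []
  | a, k + 1 => nextGap n C a :: gaps n C ((a + nextGap n C a) % n) k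

lemma nextGap_eq (n s x : ℕ) (hsn : s ≤ n) (t : List ℕ) (ht : IsIA n s t)
    (i : ℕ) (hi : i < s) :
    nextGap n (coal n x t) ((x - 1 + phi t (i + 1)) % n) =
      t[i]'(ht.1 ▸ hi) + 1 := by
  obtain ⟨hlen, hsum⟩ := ht
  have hi' : i < t.length := hlen ▸ hi
  have htop : phi t (t.length + 1) = n := by
    rw [phi_length]; omega
  have hlt : ∀ j < s, phi t (j + 1) < n := by
    intro j hj
    calc phi t (j + 1) < phi t (t.length + 1) := phi_strictMono_s5 t (by omega)
    _ = n := htop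
  have hmem : t[i]'hi' + 1 ∈ {d | 1 ≤ d ∧ ((x - 1 + phi t (i + 1)) % n + d) % n + 1 ∈ coal n x t} := by
    refine ⟨by omega, ?_⟩
    rw [Nat.mod_add_mod, add_assoc, ← phi_succ_succ t i hi']
    rcases Nat.lt_or_ge (i + 1) s with h | h
    · exact mem_coal.mpr ⟨i + 1, by omega, rfl⟩
    · have hieq : i + 2 = t.length + 1 := by omega
      rw [hieq, htop]
      refine mem_coal.mpr ⟨0, by omega, ?_⟩
      simp [phi, Nat.add_mod_right]
  have hlb : ∀ d ∈ {d | 1 ≤ d ∧ ((x - 1 + phi t (i + 1)) % n + d) % n + 1 ∈ coal n x t},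
      t[i]'hi' + 1 ≤ d := by
    rintro d ⟨hd1, hdC⟩
    by_contra hcon
    push_neg at hcon
    rw [Nat.mod_add_mod] at hdC
    obtain ⟨j, hj, hje⟩ := mem_coal.mp hdC
    have hj' : j < s := hlen ▸ hj
    have hmod : (x - 1 + (phi t (i + 1) + d)) % n = (x - 1 + phi t (j + 1)) % n := by
      rw [← add_assoc]; omega
    have hcong : phi t (i + 1) + d ≡ phi t (j + 1) [MOD n] :=
      Nat.ModEq.add_left_cancel' (x - 1) hmod
    have hbound : phi t (i + 1) + d < n := by
      have := phi_succ_succ t i hi'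
      have h2 : phi t (i + 2) ≤ phi t (t.length + 1) :=
        (phi_strictMono_s5 t).monotone (by omega)
      omega
    have heq : phi t (i + 1) + d = phi t (j + 1) := by
      have := hlt j hj'
      rwa [Nat.ModEq, Nat.mod_eq_of_lt hbound, Nat.mod_eq_of_lt this] at hcong
    rcases le_or_gt j i with h | h
    · have := (phi_strictMono_s5 t).monotone (show j ≤ i by omega)
      omega
    · have h2 : phi t (i + 2) ≤ phi t (j + 1) :=
        (phi_strictMono_s5 t).monotone (by omega)
      have := phi_succ_succ t i hi'
      omega
  exact le_antisymm (Nat.sInf_le hmem) (le_csInf ⟨_, hmem⟩ hlb)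

lemma gaps_eq (n s x : ℕ) (hs1 : 1 ≤ s) (hsn : s ≤ n) (t : List ℕ) (ht : IsIA n s t) :
    ∀ k ≤ s, ∀ i < s,
      gaps n (coal n x t) ((x - 1 + phi t (i + 1)) % n) k =
        (List.map (· + 1) (t.rotate i)).take k := by
  intro k
  induction k with
  | zero => intro _ i _; simp [gaps]
  | succ k IH =>
    intro hk i hi
    have hlen : t.length = s := ht.1
    have hi' : i < t.length := hlen ▸ hi
    have hng := nextGap_eq n s x hsn t ht i hi
    -- structure of rotate i
    have hrot : t.rotate i = t[i] :: (t.drop (i + 1) ++ t.take i) := by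
      rw [List.rotate_eq_drop_append_take (by omega), List.drop_eq_getElem_cons hi',
        List.cons_append]
    have hrlen : (t.drop (i + 1) ++ t.take i).length = s - 1 := by
      simp [List.length_drop, List.length_take]; omega
    -- next starting point
    have hnext : ((x - 1 + phi t (i + 1)) % n + (t[i]'hi' + 1)) % n
        = (x - 1 + phi t (i + 2)) % n := by
      rw [Nat.mod_add_mod, add_assoc, ← phi_succ_succ t i hi']
    have hstep : gaps n (coal n x t) ((x - 1 + phi t (i + 1)) % n) (k + 1)
        = (t[i]'hi' + 1) :: gaps n (coal n x t) ((x - 1 + phi t (i + 2)) % n) k := by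
      rw [gaps, hng, hnext]
    rw [hstep]
    -- identify the tail with rotate (i+1)
    have htail : gaps n (coal n x t) ((x - 1 + phi t (i + 2)) % n) k
        = (List.map (· + 1) (t.rotate (i + 1))).take k := by
      rcases Nat.lt_or_ge (i + 1) s with h | h
      · exact IH (by omega) (i + 1) h
      · have hieq : i + 1 = s := by omega
        have htop : phi t (i + 2) = n := by
          have h1 := phi_length t
          rw [show i + 2 = t.length + 1 by omega, h1]
          have := ht.2
          omega
        have : (x - 1 + phi t (i + 2)) % n = (x - 1 + phi t (0 + 1)) % n := by
          rw [htop, phi_one, Nat.add_mod_right, Nat.add_zero]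
        rw [this, IH (by omega) 0 (by omega)]
        rw [show i + 1 = t.length by omega, List.rotate_length, List.rotate_zero]
    rw [htail]
    -- compute RHS take
    have hrot1 : t.rotate (i + 1) = (t.drop (i + 1) ++ t.take i) ++ [t[i]] := by
      rcases Nat.lt_or_ge (i + 1) s with h | h
      · rw [List.rotate_eq_drop_append_take (by omega), List.take_succ]
        have : t[i]? = some t[i] := List.getElem?_eq_getElem hi'
        simp [this]
      · have hlen1 : i + 1 = t.length := by omega
        have hrt : t.rotate (i + 1) = t := by rw [hlen1, List.rotate_length]
        have hd : t.drop (i + 1) = ([] : List ℕ) := List.drop_eq_nil_of_le (by omega)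
        have hts : t.take (i + 1) = t.take i ++ [t[i]] := by
          rw [List.take_succ, List.getElem?_eq_getElem hi']
          rfl
        rw [hrt, hd, List.nil_append, ← hts, hlen1, List.take_length]
    rw [hrot, hrot1]
    simp only [List.map_cons, List.take_succ_cons]
    rw [List.map_append, List.take_append_of_le_length (by rw [List.length_map, hrlen]; omega)]

/-- If two increment arrays `t` and `u` of size `s` are not
equivalent (`u` is not a circular shift of `t`), then the collections of
coalitions they generate are disjoint. -/
theorem stmt5 (n s : ℕ) (hn : 1 ≤ n) (hs1 : 1 ≤ s) (hsn : s ≤ n)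
    (t u : List ℕ) (ht : IsIA n s t) (hu : IsIA n s u)
    (hnequiv : ¬ ShiftEquiv t u) :
    gen n t ∩ gen n u = ∅ := by
  rw [Finset.eq_empty_iff_forall_notMem]
  intro C hC
  rw [Finset.mem_inter] at hC
  obtain ⟨hCt, hCu⟩ := hC
  simp only [gen, Finset.mem_image, Finset.mem_Icc] at hCt hCu
  obtain ⟨x, ⟨hx1, hxn⟩, hxC⟩ := hCt
  obtain ⟨y, ⟨hy1, hyn⟩, hyC⟩ := hCu
  have hCeq : coal n x t = coal n y u := by rw [hxC, hyC]
  have hy0 : y - 1 < n := by omega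
  -- y ∈ coal n y u, hence y ∈ coal n x t
  have hymem : y ∈ coal n x t := by
    rw [hCeq]
    refine mem_coal.mpr ⟨0, by rw [hu.1]; omega, ?_⟩
    simp only [zero_add, phi_one, Nat.add_zero, Nat.mod_eq_of_lt hy0]
    omega
  obtain ⟨i, hi, hie⟩ := mem_coal.mp hymem
  have hi' : i < s := ht.1 ▸ hi
  have hyb : y - 1 = (x - 1 + phi t (i + 1)) % n := by omega
  -- compute gaps from y-1 in two ways
  have h1 : gaps n (coal n x t) (y - 1) s = List.map (· + 1) (t.rotate i) := by
    rw [hyb, gaps_eq n s x hs1 hsn t ht s le_rfl i hi']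
    apply List.take_of_length_le
    simp [ht.1]
  have h2 : gaps n (coal n x t) (y - 1) s = List.map (· + 1) u := by
    have := gaps_eq n s y hs1 hsn u hu s le_rfl 0 (by omega)
    simp only [zero_add, phi_one, Nat.add_zero, Nat.mod_eq_of_lt hy0, List.rotate_zero] at this
    rw [hCeq, this]
    apply List.take_of_length_le
    simp [hu.1]
  have hmap : List.map (· + 1) u = List.map (· + 1) (t.rotate i) := by
    rw [← h2, h1]
  have hinj : Function.Injective (· + 1 : ℕ → ℕ) := add_left_injective 1
  have hu_eq : u = t.rotate i := List.map_injective_iff.mpr hinj hmap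
  exact hnequiv ⟨i, hi, hu_eq⟩


end NDCA
end

section
/- For any increment array t of size s with period π(t), and for all agents 1 ≤ i ≤ j ≤ n: C(i, t) = C(j, t) if and only if there exists an integer r with 0 ≤ r ≤ (n − i)·s / (n·π(t)) such that j = i + r·(n·π(t)/s). -/
/-!
Unroll the coalition along `ℕ`: the partial sums `cumGap t` of the gaps `t_{m mod s} + 1` enumerate
an `n`-periodic set `S ⊆ ℕ` whose reduction mod `n` is `C(1, t) - 1`, so `C(i, t) = C(j, t)` iff `S`
is invariant under translation by `j - i`. A translation by `c` preserves the range of a strictly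
increasing enumeration starting at `0` iff `c` is one of its values `cumGap t k` and shifting the
index by `k` adds `c`, i.e. iff the gap sequence is `k`-periodic. The periods of the gap sequence
are the multiples of its minimal period, which is `π(t)`, so the admissible translations are the
multiples of `cumGap t π(t) = n π(t) / s`.
-/

open Finset Function Pointwise

theorem List.getElem_flatten_replicate {α : Type*} (b : List α) (q i : ℕ)
    (h : i < (List.replicate q b).flatten.length) :
    (List.replicate q b).flatten[i] =
      b[i % b.length]'(Nat.mod_lt _ (by rcases b with _ | _ <;> simp_all)) := by
  induction q generalizing i with
  | zero => simp at h
  | succ q ih =>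
    simp only [List.replicate_succ, List.flatten_cons, List.getElem_append]
    split_ifs with hi
    · simp only [Nat.mod_eq_of_lt hi]
    · rw [ih]
      simp only [Nat.mod_eq_sub_mod (not_lt.1 hi)]

theorem Function.Periodic.periodic_iff_of_dvd {α : Type*} {f : ℕ → α} {L p : ℕ}
    (hf : Periodic f L) (hL : 0 < L) (hp : p ∣ L) :
    Periodic f p ↔ ∀ m < L, f m = f (m % p) := by
  refine ⟨fun h m _ => (h.map_mod_nat m).symm, fun h m => ?_⟩
  calc f (m + p) = f ((m + p) % L) := (hf.map_mod_nat _).symm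
    _ = f ((m + p) % L % p) := h _ (Nat.mod_lt _ hL)
    _ = f (m % L % p) := by rw [Nat.mod_mod_of_dvd _ hp, Nat.mod_mod_of_dvd _ hp, Nat.add_mod_right]
    _ = f (m % L) := (h _ (Nat.mod_lt _ hL)).symm
    _ = f m := hf.map_mod_nat m

theorem Function.periodic_iff_isPeriodicPt_shift {α : Type*} {g : ℕ → α} {p : ℕ} :
    Periodic g p ↔ IsPeriodicPt (fun (f : ℕ → α) m => f (m + 1)) p g := by
  have iterate_shift : ∀ p, (fun (f : ℕ → α) m => f (m + 1))^[p] g = fun m => g (m + p) := by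
    intro p
    induction p with
    | zero => rfl
    | succ p ih =>
      rw [iterate_succ_apply', ih]
      exact funext fun m => congrArg g (by omega)
  rw [IsPeriodicPt, IsFixedPt, iterate_shift, funext_iff]
  rfl

section PartialSums

variable {M : Type*} [AddCancelCommMonoid M] {g : ℕ → M} {p : ℕ}

theorem Function.periodic_iff_sum_range_add :
    Periodic g p ↔ ∀ m, ∑ k ∈ range (p + m), g k = ∑ k ∈ range p, g k + ∑ k ∈ range m, g k := by
  refine ⟨fun hg m => ?_, fun h m => ?_⟩
  · rw [sum_range_add]
    exact congrArg _ (sum_congr rfl fun k _ => by rw [add_comm, hg])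
  · have hsucc := h (m + 1)
    rw [← add_assoc, sum_range_succ, sum_range_succ, h m, add_assoc] at hsucc
    rw [add_comm]
    exact add_left_cancel (add_left_cancel hsucc)

theorem Function.Periodic.sum_range_mul (hg : Periodic g p) (r : ℕ) :
    ∑ k ∈ range (r * p), g k = r • ∑ k ∈ range p, g k := by
  induction r with
  | zero => simp
  | succ r ih => rw [succ_nsmul', add_mul, one_mul, add_comm, periodic_iff_sum_range_add.1 hg, ih]

end PartialSums

theorem StrictMono.periodic_mem_range_iff {f : ℕ → ℕ} (hf : StrictMono f) (h0 : f 0 = 0) {c : ℕ} :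
    Periodic (· ∈ Set.range f) c ↔ ∃ k, f k = c ∧ ∀ m, f (k + m) = c + f m := by
  have eq_add_of_le : ∀ {k m}, f k ≤ f m → ∃ d, m = k + d := fun hle =>
    Nat.exists_eq_add_of_le (hf.le_iff_le.1 hle)
  constructor
  · intro hc
    have mem_iff : ∀ z, z + c ∈ Set.range f ↔ z ∈ Set.range f := fun z => Iff.of_eq (hc z)
    obtain ⟨k, rfl⟩ : c ∈ Set.range f := by simpa using (mem_iff 0).2 ⟨0, h0⟩
    refine ⟨k, rfl, fun m => congrFun ((StrictMono.range_inj (f := fun m => f (k + m))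
      (g := fun m => f k + f m) ?_ ?_).1 ?_) m⟩
    · exact fun a b hab => hf (Nat.add_lt_add_left hab k)
    · exact fun a b hab => Nat.add_lt_add_left (hf hab) _
    -- both ranges are the elements of `range f` that are at least `f k`
    ext z
    constructor
    · rintro ⟨m, rfl⟩
      have hle : f k ≤ f (k + m) := hf.monotone (by omega)
      obtain ⟨m', hm'⟩ := (mem_iff (f (k + m) - f k)).1 (by rw [Nat.sub_add_cancel hle]; simp)
      exact ⟨m', by simp only; omega⟩
    · rintro ⟨m, rfl⟩
      obtain ⟨m', hm'⟩ := (mem_iff (f m)).2 ⟨m, rfl⟩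
      obtain ⟨d, rfl⟩ := eq_add_of_le (k := k) (m := m') (by omega)
      exact ⟨d, by simp only; omega⟩
  · rintro ⟨k, rfl, hk⟩ z
    refine propext ⟨fun ⟨m, hm⟩ => ?_, fun ⟨m, hm⟩ => ⟨k + m, by rw [hk, hm, add_comm]⟩⟩
    obtain ⟨d, rfl⟩ := eq_add_of_le (k := k) (m := m) (by omega)
    exact ⟨d, by rw [hk] at hm; omega⟩

namespace NDCA

/-- The gaps between consecutive members of a coalition, continued periodically. -/
def gap (t : List ℕ) (m : ℕ) : ℕ := t.getD (m % t.length) 0 + 1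

/-- `cumGap t m = φ_{m+1}` for `m ≤ s`; on all of `ℕ` it enumerates `C(1, t) - 1` unrolled along
the line. -/
def cumGap (t : List ℕ) (m : ℕ) : ℕ := ∑ k ∈ range m, gap t k

/-- The members of `C(1, t)`, shifted down by one, as residues. -/
def residues (n : ℕ) (t : List ℕ) : Finset (ZMod n) :=
  (range t.length).image fun m => (cumGap t m : ZMod n)

variable {t : List ℕ}

theorem gap_of_lt {m : ℕ} (h : m < t.length) : gap t m = t[m] + 1 := by
  rw [gap, Nat.mod_eq_of_lt h, List.getD_eq_getElem]

theorem periodic_gap_length : Periodic (gap t) t.length := by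
  simp [Periodic, gap]

theorem eq_flatten_replicate_take_iff (ht : t ≠ []) {p : ℕ} (hp : 0 < p) (hpt : p ∣ t.length) :
    t = (List.replicate (t.length / p) (t.take p)).flatten ↔
      ∀ m < t.length, gap t m = gap t (m % p) := by
  have hpl : p ≤ t.length := Nat.le_of_dvd (List.length_pos_of_ne_nil ht) hpt
  have hlen : (t.take p).length = p := List.length_take_of_le hpl
  have hmod : ∀ m, m % p < t.length := fun m => (Nat.mod_lt m hp).trans_le hpl
  have getElem_flatten : ∀ m h,
      (List.replicate (t.length / p) (t.take p)).flatten[m]'h = t[m % p]'(hmod m) := by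
    intro m h
    simp only [List.getElem_flatten_replicate, hlen, List.getElem_take]
  rw [List.ext_getElem_iff]
  simp only [List.length_flatten, List.map_replicate, List.sum_replicate, hlen, smul_eq_mul,
    Nat.div_mul_cancel hpt, true_and, getElem_flatten]
  refine forall_congr' fun m => ⟨fun h hm => ?_, fun h hm _ => ?_⟩
  · rw [gap_of_lt hm, gap_of_lt (hmod m), h hm hm]
  · simpa [gap_of_lt hm, gap_of_lt (hmod m)] using h hm

theorem isPeriodOf_iff (ht : t ≠ []) {p : ℕ} :
    IsPeriodOf t p ↔ 0 < p ∧ p ∣ t.length ∧ Periodic (gap t) p := by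
  refine and_congr_right fun hp => and_congr_right fun hpt => ?_
  rw [eq_flatten_replicate_take_iff ht hp hpt,
    periodic_gap_length.periodic_iff_of_dvd (List.length_pos_of_ne_nil ht) hpt]

theorem period_eq_minimalPeriod (ht : t ≠ []) :
    period t = minimalPeriod (fun (f : ℕ → ℕ) m => f (m + 1)) (gap t) := by
  set mp := minimalPeriod (fun (f : ℕ → ℕ) m => f (m + 1)) (gap t)
  have hlen := periodic_iff_isPeriodicPt_shift.1 (periodic_gap_length (t := t))
  have mem_iff : ∀ p, IsPeriodOf t p ↔ 0 < p ∧ p ∣ t.length ∧ mp ∣ p := fun p => by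
    rw [isPeriodOf_iff ht, periodic_iff_isPeriodicPt_shift, isPeriodicPt_iff_minimalPeriod_dvd]
  have hmp : IsPeriodOf t mp := (mem_iff mp).2
    ⟨hlen.minimalPeriod_pos (List.length_pos_of_ne_nil ht), hlen.minimalPeriod_dvd, dvd_rfl⟩
  refine le_antisymm (Nat.sInf_le hmp) (le_csInf ⟨mp, hmp⟩ fun p hp => ?_)
  obtain ⟨hp, -, hdvd⟩ := (mem_iff p).1 hp
  exact Nat.le_of_dvd hp hdvd

theorem period_dvd_iff (ht : t ≠ []) {k : ℕ} : period t ∣ k ↔ Periodic (gap t) k := by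
  rw [period_eq_minimalPeriod ht, ← isPeriodicPt_iff_minimalPeriod_dvd,
    periodic_iff_isPeriodicPt_shift]

theorem period_pos (ht : t ≠ []) : 0 < period t := by
  rw [period_eq_minimalPeriod ht]
  exact (periodic_iff_isPeriodicPt_shift.1 periodic_gap_length).minimalPeriod_pos
    (List.length_pos_of_ne_nil ht)

theorem cumGap_zero : cumGap t 0 = 0 := rfl

theorem cumGap_strictMono : StrictMono (cumGap t) :=
  strictMono_nat_of_lt_succ fun m => by simp [cumGap, sum_range_succ, gap]

theorem phi_succ_eq_cumGap {m : ℕ} (h : m ≤ t.length) : phi t (m + 1) = cumGap t m := by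
  induction m with
  | zero => simp [phi, cumGap]
  | succ m ih =>
    rw [cumGap, sum_range_succ, ← cumGap, ← ih (by omega), gap_of_lt h]
    simp only [phi, Nat.add_sub_cancel, List.sum_take_succ _ _ h]
    omega

theorem cumGap_length : cumGap t t.length = t.sum + t.length := by
  rw [← phi_succ_eq_cumGap le_rfl, phi, Nat.add_sub_cancel, List.take_length]

theorem cumGap_mul_period (ht : t ≠ []) (r : ℕ) :
    cumGap t (r * period t) = r * cumGap t (period t) := by
  rw [cumGap, cumGap, Periodic.sum_range_mul ((period_dvd_iff ht).1 dvd_rfl), smul_eq_mul]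

theorem cumGap_period_mul_length (ht : t ≠ []) :
    cumGap t (period t) * t.length = (t.sum + t.length) * period t := by
  have hdvd : period t ∣ t.length := (period_dvd_iff ht).2 periodic_gap_length
  have h := cumGap_mul_period ht (t.length / period t)
  rw [Nat.div_mul_cancel hdvd, cumGap_length] at h
  rw [h, mul_comm (t.length / period t), mul_assoc, Nat.div_mul_cancel hdvd]

theorem periodic_mem_range_cumGap_iff (ht : t ≠ []) {c : ℕ} :
    Periodic (· ∈ Set.range (cumGap t)) c ↔ ∃ r, c = r * cumGap t (period t) := by
  rw [StrictMono.periodic_mem_range_iff cumGap_strictMono cumGap_zero]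
  constructor
  · rintro ⟨k, rfl, hk⟩
    obtain ⟨r, rfl⟩ := (period_dvd_iff ht).2 (periodic_iff_sum_range_add.2 hk)
    exact ⟨r, by rw [mul_comm, cumGap_mul_period ht]⟩
  · rintro ⟨r, rfl⟩
    refine ⟨r * period t, cumGap_mul_period ht r, ?_⟩
    rw [← cumGap_mul_period ht]
    exact periodic_iff_sum_range_add.1 ((period_dvd_iff ht).1 (dvd_mul_left _ _))

theorem natCast_mem_residues_iff {n : ℕ} (ht : t ≠ []) (hn : t.sum + t.length = n) (z : ℕ) :
    (z : ZMod n) ∈ residues n t ↔ z ∈ Set.range (cumGap t) := by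
  have hper : Periodic (· ∈ Set.range (cumGap t)) n :=
    (StrictMono.periodic_mem_range_iff cumGap_strictMono cumGap_zero).2 ⟨t.length,
      by rw [cumGap_length, hn], fun m => by
        rw [← hn, ← cumGap_length]
        exact periodic_iff_sum_range_add.1 periodic_gap_length m⟩
  have lt_iff : ∀ m, cumGap t m < n ↔ m < t.length := fun m => by
    rw [← hn, ← cumGap_length]
    exact cumGap_strictMono.lt_iff_lt
  have hn0 : 0 < n := by have := List.length_pos_of_ne_nil ht; omega
  rw [← hper.map_mod_nat z]
  simp only [residues, Finset.mem_image, Finset.mem_range, Set.mem_range,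
    ZMod.natCast_eq_natCast_iff']
  constructor
  · rintro ⟨m, hm, h⟩
    exact ⟨m, by rw [← h, Nat.mod_eq_of_lt ((lt_iff m).2 hm)]⟩
  · rintro ⟨m, h⟩
    refine ⟨m, (lt_iff m).1 (h ▸ Nat.mod_lt _ hn0), by rw [h, Nat.mod_mod]⟩

theorem vadd_residues_eq_iff {n : ℕ} (ht : t ≠ []) (hn : t.sum + t.length = n) (c : ℕ) :
    (c : ZMod n) +ᵥ residues n t = residues n t ↔ Periodic (· ∈ Set.range (cumGap t)) c := by
  constructor
  · intro h z
    refine propext ?_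
    simp only
    rw [← natCast_mem_residues_iff ht hn, ← natCast_mem_residues_iff ht hn, Nat.cast_add, add_comm]
    conv_lhs => rw [← h]
    exact Finset.vadd_mem_vadd_finset_iff _
  · intro hc
    refine Finset.eq_of_subset_of_card_le (fun w hw => ?_) (Finset.card_vadd_finset _ _).ge
    obtain ⟨y, hy, rfl⟩ := Finset.mem_vadd_finset.1 hw
    obtain ⟨m, -, rfl⟩ := Finset.mem_image.1 hy
    rw [vadd_eq_add, ← Nat.cast_add, natCast_mem_residues_iff ht hn, add_comm]
    exact (Iff.of_eq (hc _)).2 ⟨m, rfl⟩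

theorem coal_eq_image_residues (n x : ℕ) :
    coal n x t = (((x - 1 : ℕ) : ZMod n) +ᵥ residues n t).image fun w => w.val + 1 := by
  ext y
  simp only [coal, residues, Finset.mem_image, Finset.mem_vadd_finset, Finset.mem_Icc,
    Finset.mem_range, vadd_eq_add]
  constructor
  · rintro ⟨i, ⟨hi1, hi2⟩, rfl⟩
    refine ⟨_, ⟨_, ⟨i - 1, by omega, rfl⟩, rfl⟩, ?_⟩
    rw [← Nat.cast_add, ZMod.val_natCast, ← phi_succ_eq_cumGap (by omega), Nat.sub_add_cancel hi1]
  · rintro ⟨_, ⟨_, ⟨m, hm, rfl⟩, rfl⟩, rfl⟩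
    refine ⟨m + 1, ⟨by omega, by omega⟩, ?_⟩
    rw [← Nat.cast_add, ZMod.val_natCast, ← phi_succ_eq_cumGap hm.le]

theorem coal_eq_coal_iff {n i j : ℕ} (ht : t ≠ []) (hn : t.sum + t.length = n) (hi : 1 ≤ i)
    (hij : i ≤ j) :
    coal n i t = coal n j t ↔ Periodic (· ∈ Set.range (cumGap t)) (j - i) := by
  have : NeZero n := ⟨by have := List.length_pos_of_ne_nil ht; omega⟩
  have hinj : Injective fun w : ZMod n => w.val + 1 := fun a b h =>
    ZMod.val_injective n (Nat.add_right_cancel h)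
  have hcast : ((j - 1 : ℕ) : ZMod n) = ((i - 1 : ℕ) : ZMod n) + ((j - i : ℕ) : ZMod n) := by
    rw [← Nat.cast_add]
    congr 1
    omega
  rw [coal_eq_image_residues, coal_eq_image_residues, (Finset.image_injective hinj).eq_iff,
    hcast, add_vadd, vadd_left_cancel_iff, eq_comm, vadd_residues_eq_iff ht hn]

theorem stmt6_general (n s : ℕ) (hs1 : 1 ≤ s) (hsn : s ≤ n)
    (t : List ℕ) (ht : IsIA n s t)
    (i j : ℕ) (hi : 1 ≤ i) (hij : i ≤ j) (hj : j ≤ n) :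
    coal n i t = coal n j t ↔
      ∃ r, r ≤ (n - i) * s / (n * period t) ∧
        j = i + r * (n * period t / s) := by
  obtain ⟨rfl, hsum⟩ := ht
  have hne : t ≠ [] := List.ne_nil_of_length_pos hs1
  have htot : t.sum + t.length = n := by omega
  have hD : 0 < cumGap t (period t) := by
    simpa [cumGap_zero] using cumGap_strictMono (period_pos hne)
  have hstride : n * period t = cumGap t (period t) * t.length := by
    rw [cumGap_period_mul_length hne, htot, mul_comm]
  rw [coal_eq_coal_iff hne htot hi hij, periodic_mem_range_cumGap_iff hne, hstride,
    Nat.mul_div_cancel _ hs1, Nat.mul_div_mul_right _ _ hs1]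
  constructor
  · rintro ⟨r, hr⟩
    exact ⟨r, (Nat.le_div_iff_mul_le hD).2 (by omega), by omega⟩
  · rintro ⟨r, -, rfl⟩
    exact ⟨r, by omega⟩

/-- For any increment array `t` of size `s` with period
`π(t)`, and all agents `1 ≤ i ≤ j ≤ n`:  `C(i,t) = C(j,t)` iff there exists
`0 ≤ r ≤ (n-i)·s / (n·π(t))` with `j = i + r·(n·π(t)/s)`. -/
theorem stmt6 (n s : ℕ) (hn : 1 ≤ n) (hs1 : 1 ≤ s) (hsn : s ≤ n)
    (t : List ℕ) (ht : IsIA n s t)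
    (i j : ℕ) (hi : 1 ≤ i) (hij : i ≤ j) (hj : j ≤ n) :
    coal n i t = coal n j t ↔
      ∃ r, r ≤ (n - i) * s / (n * period t) ∧
        j = i + r * (n * period t / s) :=
  stmt6_general n s hs1 hsn t ht i j hi hij hj

end NDCA
end

section
/- For any increment array t of size s with period π(t), the repetition count μ = s/π(t) divides both s and n, and hence μ divides gcd(n, s). Consequently, if gcd(n, s) = 1 then every increment array of size s is aperiodic, i.e., π(t) = s. -/
namespace NDCA

/-- For any increment array `t` of size `s` with period
`π(t)`, the repetition count `μ = s/π(t)` divides both `s` and `n`, hence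
divides `gcd(n, s)`.  Consequently, if `gcd(n, s) = 1` then `t` is
aperiodic, i.e. `π(t) = s`. -/
theorem stmt8 (n s : ℕ) (hn : 1 ≤ n) (hs1 : 1 ≤ s) (hsn : s ≤ n)
    (t : List ℕ) (ht : IsIA n s t) :
    (s / period t ∣ s ∧ s / period t ∣ n ∧ s / period t ∣ Nat.gcd n s) ∧
    (Nat.gcd n s = 1 → period t = s) := by
  obtain ⟨hlen, hsum⟩ := ht
  have hself : IsPeriodOf t s := by
    refine ⟨hs1, by rw [hlen], ?_⟩
    rw [hlen, Nat.div_self hs1]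
    simp [List.take_of_length_le (le_of_eq hlen)]
  have hmem : period t ∈ {p | IsPeriodOf t p} := Nat.sInf_mem ⟨s, hself⟩
  obtain ⟨hp1, hpdvd, hrep⟩ := hmem
  rw [hlen] at hpdvd hrep
  set p := period t with hpdef
  set μ := s / p with hμ
  have hsp : s = p * μ := (Nat.mul_div_cancel' hpdvd).symm
  have hμs : μ ∣ s := ⟨p, by rw [hsp]; ring⟩
  -- sum of t = μ * (sum of take p)
  have hsum' : t.sum = μ * (t.take p).sum := by
    conv_lhs => rw [hrep]
    rw [List.sum_flatten]
    simp [List.map_replicate, List.sum_replicate, smul_eq_mul]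
  have hn' : n = t.sum + s := by omega
  have hμn : μ ∣ n := by
    rw [hn', hsum', hsp]
    exact Dvd.dvd.add (Dvd.intro _ rfl) ⟨p, by ring⟩
  refine ⟨⟨hμs, hμn, Nat.dvd_gcd hμn hμs⟩, fun hgcd => ?_⟩
  have : μ ∣ 1 := hgcd ▸ Nat.dvd_gcd hμn hμs
  have hμ1 : μ = 1 := Nat.eq_one_of_dvd_one this
  rw [hμ1, mul_one] at hsp
  omega

end NDCA
end

section
/- For any two increment arrays t and u of size s, the following are equivalent: (a) t ≈ u; (b) ⋃_{i=1}^{n} {C(i, t)} ∩ ⋃_{i=1}^{n} {C(i, u)} ≠ ∅; (c) ⋃_{i=1}^{n} {C(i, t)} = ⋃_{i=1}^{n} {C(i, u)}. That is, two IAs generate a coalition in common if and only if they are circular shifts of each other, in which case they generate exactly the same collection of coalitions. -/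
namespace NDCA

/-! ### Auxiliary definitions -/

/-- Prefix sums shifted by index. -/
def P (t : List ℕ) (j : ℕ) : ℕ := (t.take j).sum + j

def Phi (t : List ℕ) : Finset ℕ := (Finset.range t.length).image (P t)

lemma sum_take_mono (t : List ℕ) {j j' : ℕ} (h : j ≤ j') :
    (t.take j).sum ≤ (t.take j').sum := by
  conv_rhs => rw [← List.take_append_drop j (t.take j')]
  rw [List.sum_append, List.take_take, min_eq_left h]
  exact Nat.le_add_right _ _

lemma P_strictMono (t : List ℕ) : StrictMono (P t) := by
  intro j j' h
  have := sum_take_mono t h.le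
  unfold P; omega

lemma P_zero (t : List ℕ) : P t 0 = 0 := by simp [P]

lemma P_length {n s : ℕ} {t : List ℕ} (hsn : s ≤ n) (ht : IsIA n s t) :
    P t s = n := by
  unfold P
  rw [← ht.1, List.take_length]
  have h1 := ht.1; have h2 := ht.2; omega

lemma P_lt_n {n s : ℕ} {t : List ℕ} (hsn : s ≤ n) (ht : IsIA n s t)
    {j : ℕ} (hj : j < s) : P t j < n := by
  have := P_strictMono t hj
  rw [P_length hsn ht] at this; exact this

lemma rotate_IA {n s : ℕ} {t : List ℕ} (ht : IsIA n s t) (k : ℕ) :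
    IsIA n s (t.rotate k) :=
  ⟨by rw [List.length_rotate]; exact ht.1, by rw [(List.rotate_perm t k).sum_eq]; exact ht.2⟩

/-! ### `coal` via `Phi` -/

lemma coal_eq_image (n x : ℕ) (t : List ℕ) :
    coal n x t = (Phi t).image (fun a => (x - 1 + a) % n + 1) := by
  unfold coal Phi
  rw [Finset.image_image]
  ext a
  simp only [Finset.mem_image, Finset.mem_Icc, Finset.mem_range, Function.comp]
  constructor
  · rintro ⟨i, ⟨h1, h2⟩, rfl⟩
    exact ⟨i - 1, by omega, rfl⟩
  · rintro ⟨j, hj, rfl⟩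
    refine ⟨j + 1, ⟨by omega, by omega⟩, ?_⟩
    simp [phi, P]

/-! ### Injectivity of `Phi` on IAs -/

lemma eq_of_P_eq {n s : ℕ} (hsn : s ≤ n) {t u : List ℕ} (ht : IsIA n s t)
    (hu : IsIA n s u) (h : ∀ j < s, P t j = P u j) : t = u := by
  have h' : ∀ j ≤ s, P t j = P u j := by
    intro j hj
    rcases eq_or_lt_of_le hj with rfl | hj
    · rw [P_length hsn ht, P_length hsn hu]
    · exact h j hj
  apply List.ext_get (ht.1.trans hu.1.symm)
  intro i h1 h2
  have hi : i < s := ht.1 ▸ h1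
  have e1 := List.sum_take_succ t i h1
  have e2 := List.sum_take_succ u i h2
  have q1 := h' i hi.le
  have q2 := h' (i + 1) hi
  unfold P at q1 q2
  simp only [List.get_eq_getElem] at e1 e2 ⊢
  omega

lemma Phi_card {n s : ℕ} {t : List ℕ} (ht : IsIA n s t) : (Phi t).card = s := by
  unfold Phi
  rw [Finset.card_image_of_injective _ (P_strictMono t).injective,
    Finset.card_range, ht.1]

lemma Phi_inj {n s : ℕ} (hsn : s ≤ n) {t u : List ℕ} (ht : IsIA n s t)
    (hu : IsIA n s u) (h : Phi t = Phi u) : t = u := by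
  have hmem : ∀ i : Fin s, P t i ∈ Phi t := fun i => by
    unfold Phi
    exact Finset.mem_image_of_mem _ (Finset.mem_range.2 (ht.1 ▸ i.isLt))
  have hmem' : ∀ i : Fin s, P u i ∈ Phi t := fun i => by
    rw [h]; unfold Phi
    exact Finset.mem_image_of_mem _ (Finset.mem_range.2 (hu.1 ▸ i.isLt))
  have hst : StrictMono (fun i : Fin s => P t i) :=
    fun a b hab => P_strictMono t hab
  have hsu : StrictMono (fun i : Fin s => P u i) :=
    fun a b hab => P_strictMono u hab
  have e1 := Finset.orderEmbOfFin_unique (Phi_card ht) hmem hst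
  have e2 := Finset.orderEmbOfFin_unique (Phi_card ht) hmem' hsu
  apply eq_of_P_eq hsn ht hu
  intro j hj
  have := congrFun (e1.trans e2.symm) ⟨j, hj⟩
  exact this

/-! ### Rotation -/

lemma sum_take_rotate_left {t : List ℕ} {k j : ℕ} (hk : k ≤ t.length)
    (hj : j ≤ t.length - k) :
    ((t.rotate k).take j).sum = (t.take (k + j)).sum - (t.take k).sum := by
  rw [List.rotate_eq_drop_append_take hk, List.take_append]
  have hlen : (t.drop k).length = t.length - k := List.length_drop ..
  have hz : j - (t.drop k).length = 0 := by omega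
  rw [hz, List.take_zero, List.append_nil]
  have key : t.take (k + j) = t.take k ++ (t.drop k).take j := by
    rw [← List.take_append_drop k (t.take (k + j)), List.take_take,
      min_eq_left (by omega), List.drop_take]
    congr 2
    omega
  rw [key, List.sum_append]
  omega

lemma sum_take_rotate_right {t : List ℕ} {k j : ℕ} (hk : k ≤ t.length)
    (hj1 : t.length - k ≤ j) (hj2 : j ≤ t.length) :
    ((t.rotate k).take j).sum
      = t.sum - (t.take k).sum + (t.take (j - (t.length - k))).sum := by
  rw [List.rotate_eq_drop_append_take hk, List.take_append]
  have hlen : (t.drop k).length = t.length - k := List.length_drop ..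
  rw [List.take_of_length_le (by omega), List.sum_append, List.take_take,
    hlen]
  have hsplit : t.sum = (t.take k).sum + (t.drop k).sum := by
    conv_lhs => rw [← List.take_append_drop k t]
    rw [List.sum_append]
  rw [min_eq_left (by omega)]
  omega



lemma P_rotate_mod {n s : ℕ} (hsn : s ≤ n) {t : List ℕ} (ht : IsIA n s t)
    {k j : ℕ} (hk : k < s) (hj : j < s) :
    P (t.rotate k) j
      = (P t (if j < s - k then k + j else j - (s - k)) + (n - P t k)) % n := by
  have hL : t.length = s := ht.1
  have hrot := rotate_IA ht k
  have hPr : P (t.rotate k) j < n := P_lt_n hsn hrot hj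
  have hPk : P t k < n := P_lt_n hsn ht hk
  have hc : (t.take k).sum ≤ t.sum := by
    conv_rhs => rw [← List.take_length (l := t)]
    exact sum_take_mono t (by omega)
  have hsum : t.sum = n - s := ht.2
  have d1 : P (t.rotate k) j = ((t.rotate k).take j).sum + j := rfl
  have d3 : P t k = (t.take k).sum + k := rfl
  split_ifs with hcase
  · -- j < s - k
    have e := sum_take_rotate_left (t := t) (k := k) (j := j) (by omega) (by omega)
    have hmono : (t.take k).sum ≤ (t.take (k + j)).sum := sum_take_mono t (by omega)
    have d2 : P t (k + j) = (t.take (k + j)).sum + (k + j) := rfl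
    rw [show P t (k + j) + (n - P t k) = P (t.rotate k) j + n by omega,
      Nat.add_mod_right, Nat.mod_eq_of_lt hPr]
  · -- j ≥ s - k
    have e := sum_take_rotate_right (t := t) (k := k) (j := j) (by omega) (by omega)
    rw [hL] at e
    have hmono : (t.take (j - (s - k))).sum ≤ (t.take k).sum := sum_take_mono t (by omega)
    have d2 : P t (j - (s - k)) = (t.take (j - (s - k))).sum + (j - (s - k)) := rfl
    rw [show P t (j - (s - k)) + (n - P t k) = P (t.rotate k) j by omega,
      Nat.mod_eq_of_lt hPr]

lemma Phi_rotate {n s : ℕ} (hsn : s ≤ n) {t : List ℕ} (ht : IsIA n s t)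
    {k : ℕ} (hk : k < s) :
    Phi (t.rotate k) = (Phi t).image (fun a => (a + (n - P t k)) % n) := by
  have hL : t.length = s := ht.1
  have hLr : (t.rotate k).length = s := (rotate_IA ht k).1
  unfold Phi
  rw [Finset.image_image, hL, hLr]
  ext a
  simp only [Finset.mem_image, Finset.mem_range, Function.comp]
  constructor
  · rintro ⟨j, hj, rfl⟩
    refine ⟨if j < s - k then k + j else j - (s - k), by split_ifs <;> omega, ?_⟩
    rw [P_rotate_mod hsn ht hk hj]
  · rintro ⟨i, hi, rfl⟩
    have hjlt : (if k ≤ i then i - k else i + (s - k)) < s := by split_ifs <;> omega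
    refine ⟨if k ≤ i then i - k else i + (s - k), hjlt, ?_⟩
    rw [P_rotate_mod hsn ht hk hjlt]
    have hidx : (if (if k ≤ i then i - k else i + (s - k)) < s - k
        then k + (if k ≤ i then i - k else i + (s - k))
        else (if k ≤ i then i - k else i + (s - k)) - (s - k)) = i := by
      split_ifs <;> omega
    rw [hidx]

lemma coal_rotate {n s : ℕ} (hsn : s ≤ n) {t : List ℕ}
    (ht : IsIA n s t) {k : ℕ} (hk : k < s) (x : ℕ) :
    coal n x (t.rotate k) = coal n ((x - 1 + (n - P t k)) % n + 1) t := by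
  rw [coal_eq_image, coal_eq_image, Phi_rotate hsn ht hk, Finset.image_image]
  apply Finset.image_congr
  intro a _
  simp only [Function.comp, Nat.add_sub_cancel]
  rw [Nat.add_mod_mod, Nat.mod_add_mod]
  have : x - 1 + (a + (n - P t k)) = x - 1 + (n - P t k) + a := by ring
  rw [this]



lemma mem_Phi {t : List ℕ} {a : ℕ} : a ∈ Phi t ↔ ∃ j < t.length, P t j = a := by
  simp [Phi, Finset.mem_image, Finset.mem_range]

lemma mem_Phi_lt {n s : ℕ} (hsn : s ≤ n) {t : List ℕ} (ht : IsIA n s t)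
    {a : ℕ} (ha : a ∈ Phi t) : a < n := by
  obtain ⟨j, hj, rfl⟩ := mem_Phi.1 ha
  exact P_lt_n hsn ht (ht.1 ▸ hj)

lemma zero_mem_Phi {t : List ℕ} (h : 0 < t.length) : (0 : ℕ) ∈ Phi t :=
  mem_Phi.2 ⟨0, h, P_zero t⟩

lemma gen_rotate_subset {n s : ℕ} (hn : 1 ≤ n) (hsn : s ≤ n) {t : List ℕ}
    (ht : IsIA n s t) {k : ℕ} (hk : k < s) :
    gen n (t.rotate k) ⊆ gen n t := by
  intro S hS
  obtain ⟨x, hx, rfl⟩ := Finset.mem_image.1 hS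
  rw [coal_rotate hsn ht hk x]
  apply Finset.mem_image_of_mem
  rw [Finset.mem_Icc]
  have : (x - 1 + (n - P t k)) % n < n := Nat.mod_lt _ (by omega)
  omega

lemma gen_rotate_eq {n s : ℕ} (hn : 1 ≤ n) (hsn : s ≤ n) {t : List ℕ}
    (ht : IsIA n s t) {k : ℕ} (hk : k < s) :
    gen n (t.rotate k) = gen n t := by
  rcases Nat.eq_zero_or_pos k with rfl | hk0
  · rw [List.rotate_zero]
  · apply Finset.Subset.antisymm (gen_rotate_subset hn hsn ht hk)
    have h2 : t = (t.rotate k).rotate (s - k) := by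
      rw [List.rotate_rotate, show k + (s - k) = s from by omega, ← ht.1,
        List.rotate_length]
    conv_lhs => rw [h2]
    exact gen_rotate_subset hn hsn (rotate_IA ht k) (by omega)

lemma coal_eq_shiftEquiv {n s : ℕ} (hn : 1 ≤ n) (hs1 : 1 ≤ s) (hsn : s ≤ n)
    {t u : List ℕ} (ht : IsIA n s t) (hu : IsIA n s u) {x y : ℕ}
    (hx : x ∈ Finset.Icc 1 n) (hy : y ∈ Finset.Icc 1 n)
    (h : coal n x t = coal n y u) : ShiftEquiv t u := by
  rw [Finset.mem_Icc] at hx hy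
  -- strip the `+ 1`
  rw [coal_eq_image, coal_eq_image] at h
  have h2 : (Phi t).image (fun a => (x - 1 + a) % n)
      = (Phi u).image (fun a => (y - 1 + a) % n) := by
    apply Finset.image_injective (f := fun b => b + 1) (add_left_injective 1)
    rw [Finset.image_image, Finset.image_image]
    exact h
  -- `Phi u` is a shift of `Phi t`
  have key : ∀ b ∈ Phi u, ((y - 1 + b) % n + (n - (y - 1))) % n = b := by
    intro b hb
    have hbn : b < n := mem_Phi_lt hsn hu hb
    rw [Nat.mod_add_mod, show y - 1 + b + (n - (y - 1)) = b + n from by omega,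
      Nat.add_mod_right, Nat.mod_eq_of_lt hbn]
  have step2 : Phi u
      = (Phi t).image (fun a => (a + (x - 1 + (n - (y - 1)))) % n) := by
    have e1 : ((Phi u).image (fun a => (y - 1 + a) % n)).image
        (fun c => (c + (n - (y - 1))) % n) = Phi u := by
      rw [Finset.image_image]
      refine Eq.trans (Finset.image_congr (g := id) ?_) Finset.image_id
      intro b hb
      simp only [Function.comp_apply, id]
      exact key b hb
    rw [← e1, ← h2, Finset.image_image]
    apply Finset.image_congr
    intro a _
    simp only [Function.comp_apply]
    rw [Nat.mod_add_mod]
    have : x - 1 + a + (n - (y - 1)) = a + (x - 1 + (n - (y - 1))) := by omega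
    rw [this]
  -- find the rotation amount
  have h0 : (0 : ℕ) ∈ Phi u := zero_mem_Phi (by have := hu.1; omega)
  rw [step2, Finset.mem_image] at h0
  obtain ⟨a, ha, ha0⟩ := h0
  obtain ⟨k, hkL, rfl⟩ := mem_Phi.1 ha
  have hk : k < s := ht.1 ▸ hkL
  have hPk : P t k < n := P_lt_n hsn ht hk
  -- the shift by `E` equals the shift by `n - P t k` modulo `n`
  have hdvd : n ∣ P t k + (x - 1 + (n - (y - 1))) := Nat.dvd_of_mod_eq_zero ha0
  obtain ⟨q, hq⟩ := hdvd
  have shift_eq : ∀ b,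
      (b + (x - 1 + (n - (y - 1)))) % n = (b + (n - P t k)) % n := by
    intro b
    have e1 : (b + (x - 1 + (n - (y - 1))) + P t k) % n = b % n := by
      rw [show b + (x - 1 + (n - (y - 1))) + P t k = b + n * q from by omega,
        Nat.add_mul_mod_self_left]
    have e2 : (b + (n - P t k) + P t k) % n = b % n := by
      rw [show b + (n - P t k) + P t k = b + n from by omega, Nat.add_mod_right]
    exact Nat.ModEq.add_right_cancel' (P t k) (e1.trans e2.symm)
  have step3 : Phi u = Phi (t.rotate k) := by
    rw [step2, Phi_rotate hsn ht hk]
    exact Finset.image_congr (fun b _ => shift_eq b)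
  exact ⟨k, hkL, (Phi_inj hsn (rotate_IA ht k) hu step3.symm).symm⟩


/-- For any two increment arrays `t`, `u` of size `s`,
the following are equivalent: (a) `t ≈ u`; (b) the collections of coalitions
they generate intersect; (c) those collections coincide. -/
theorem stmt10 (n s : ℕ) (hn : 1 ≤ n) (hs1 : 1 ≤ s) (hsn : s ≤ n)
    (t u : List ℕ) (ht : IsIA n s t) (hu : IsIA n s u) :
    ((gen n t ∩ gen n u).Nonempty ↔ ShiftEquiv t u) ∧
    (gen n t = gen n u ↔ ShiftEquiv t u) := by
  have hac : ShiftEquiv t u → gen n t = gen n u := by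
    rintro ⟨k, hkL, rfl⟩
    exact (gen_rotate_eq hn hsn ht (ht.1 ▸ hkL)).symm
  have hba : (gen n t ∩ gen n u).Nonempty → ShiftEquiv t u := by
    rintro ⟨S, hS⟩
    rw [Finset.mem_inter] at hS
    obtain ⟨x, hx, hxS⟩ := Finset.mem_image.1 hS.1
    obtain ⟨y, hy, hyS⟩ := Finset.mem_image.1 hS.2
    exact coal_eq_shiftEquiv hn hs1 hsn ht hu hx hy (hxS.trans hyS.symm)
  have hne : (gen n t).Nonempty :=
    ⟨coal n 1 t, Finset.mem_image_of_mem _ (Finset.mem_Icc.2 ⟨le_refl 1, hn⟩)⟩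
  refine ⟨⟨hba, fun h => ?_⟩, ⟨fun h => hba ?_, hac⟩⟩
  · rw [← hac h, Finset.inter_self]
    exact hne
  · rw [h, Finset.inter_self]
    exact ⟨coal n 1 u, Finset.mem_image_of_mem _ (Finset.mem_Icc.2 ⟨le_refl 1, hn⟩)⟩

end NDCA
end

section
/- The binomial coefficient C(n, s) decomposes over the ≈-equivalence classes of increment arrays of size s as the sum of their strides: C(n, s) = Σ_{[t]} n·π(t)/s, where the sum ranges over one representative t of each equivalence class. Equivalently, C(n, s) = n·|A(n, s)| + Σ_{t ∈ P(n, s)} ϖ(t), where A(n, s) is the set of aperiodic canonical representatives (π(t) = s), P(n, s) the set of periodic ones (π(t) < s), and ϖ(t) = n·π(t)/s. -/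
/-!
By stars and bars there are `C(n-1, s-1)` increment arrays of size `s`. Their `≈`-classes are
the orbits of rotation by one place, and the orbit of `t` has exactly `π(t)` elements, because a
list fixed by rotation through `p ∣ |t|` places is `|t|/p` copies of its first `p` entries, so
`π(t)` is the minimal period of `t` under rotation. Summing over the classes gives
`Σ π(t) = C(n-1, s-1)`, and `n·C(n-1, s-1) = s·C(n, s)`. Each stride is an integer: `t` is
`s/π(t)` copies of a block, so `s/π(t)` divides `Σ t + s = n`.
-/

namespace NDCA

open Finset Function

def listsWithSum (s m : ℕ) : Finset (List ℕ) :=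
  (Nat.antidiagonalTuple s m).image List.ofFn

lemma mem_listsWithSum {s m : ℕ} {t : List ℕ} :
    t ∈ listsWithSum s m ↔ t.length = s ∧ t.sum = m := by
  constructor
  · intro h
    obtain ⟨f, hf, rfl⟩ := mem_image.mp h
    simpa [List.sum_ofFn] using Nat.mem_antidiagonalTuple.mp hf
  · rintro ⟨rfl, rfl⟩
    exact mem_image.mpr
      ⟨t.get, Nat.mem_antidiagonalTuple.mpr (by simp [← List.sum_ofFn]), List.ofFn_get t⟩

lemma card_antidiagonalTuple (s m : ℕ) :
    #(Nat.antidiagonalTuple s m) = (s + m - 1).choose m := by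
  calc #(Nat.antidiagonalTuple s m)
      = Nat.card {f : Fin s → ℕ // ∑ i, f i = m} := by
        rw [← Nat.card_eq_finsetCard]
        exact Nat.card_congr (Equiv.subtypeEquivRight fun _ => Nat.mem_antidiagonalTuple)
    _ = Nat.card (Sym (Fin s) m) := Nat.card_congr (Sym.equivNatSumOfFintype (Fin s) m).symm
    _ = (s + m - 1).choose m := by simp [Nat.card_eq_fintype_card, Sym.card_sym_eq_choose]

lemma card_listsWithSum (s m : ℕ) : #(listsWithSum s m) = (s + m - 1).choose m := by
  rw [listsWithSum, card_image_of_injective _ List.ofFn_injective, card_antidiagonalTuple]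

section Rotation

variable {α : Type*}

lemma iterate_rotate_one (l : List α) (k : ℕ) : (·.rotate 1)^[k] l = l.rotate k := by
  induction k with
  | zero => simp
  | succ k ih => rw [iterate_succ_apply', ih, List.rotate_rotate]

lemma isPeriodicPt_rotate_one_iff {l : List α} {k : ℕ} :
    IsPeriodicPt (·.rotate 1) k l ↔ l.rotate k = l := by
  rw [IsPeriodicPt, IsFixedPt, iterate_rotate_one]

lemma isPeriodicPt_rotate_one_length (l : List α) : IsPeriodicPt (·.rotate 1) l.length l :=
  isPeriodicPt_rotate_one_iff.mpr l.rotate_length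

lemma rotate_flatten_replicate (q : ℕ) (c : List α) :
    (List.replicate q c).flatten.rotate c.length = (List.replicate q c).flatten := by
  cases q with
  | zero => simp
  | succ q =>
    rw [List.replicate_succ, List.flatten_cons, List.rotate_append_length_eq,
      ← List.flatten_concat, ← List.replicate_succ', List.replicate_succ, List.flatten_cons]

lemma take_mul_eq_flatten_replicate {l : List α} {p : ℕ} (h : l.rotate p = l) :
    ∀ {q : ℕ}, p * q ≤ l.length → l.take (p * q) = (List.replicate q (l.take p)).flatten
  | 0, _ => by simp
  | q + 1, hq => by
    rw [Nat.mul_succ] at hq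
    have hpq : p * q ≤ (l.drop p).length := by rw [List.length_drop]; omega
    have hdrop : (l.drop p).take (p * q) = l.take (p * q) := by
      conv_rhs => rw [← h, List.rotate_eq_drop_append_take (by omega)]
      rw [List.take_append_of_le_length hpq]
    rw [List.replicate_succ, List.flatten_cons, ← take_mul_eq_flatten_replicate h (by omega),
      Nat.mul_succ, Nat.add_comm, List.take_add, hdrop]

lemma eq_flatten_replicate_of_rotate_eq {l : List α} {p : ℕ} (h : l.rotate p = l)
    (hp : p ∣ l.length) : l = (List.replicate (l.length / p) (l.take p)).flatten := by
  rw [← take_mul_eq_flatten_replicate h (Nat.mul_div_cancel' hp).le, Nat.mul_div_cancel' hp,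
    List.take_length]

lemma mem_periodicPts_rotate_one (l : List α) : l ∈ periodicPts (·.rotate 1) := by
  cases l with
  | nil => exact mk_mem_periodicPts one_pos (isPeriodicPt_rotate_one_iff.mpr rfl)
  | cons a l => exact mk_mem_periodicPts (by simp) (isPeriodicPt_rotate_one_length _)

noncomputable def rotationPeriod (l : List α) : ℕ := minimalPeriod (·.rotate 1) l

lemma rotationPeriod_pos (l : List α) : 0 < rotationPeriod l :=
  minimalPeriod_pos_of_mem_periodicPts (mem_periodicPts_rotate_one l)

lemma rotationPeriod_dvd_length (l : List α) : rotationPeriod l ∣ l.length :=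
  (isPeriodicPt_rotate_one_length l).minimalPeriod_dvd

lemma rotate_rotationPeriod (l : List α) : l.rotate (rotationPeriod l) = l :=
  isPeriodicPt_rotate_one_iff.mp (isPeriodicPt_minimalPeriod _ l)

lemma rotationPeriod_le {l : List α} {k : ℕ} (hk : 0 < k) (h : l.rotate k = l) :
    rotationPeriod l ≤ k :=
  (isPeriodicPt_rotate_one_iff.mpr h).minimalPeriod_le hk

variable [DecidableEq α]

noncomputable def rotations (l : List α) : Finset (List α) :=
  (range (rotationPeriod l)).image l.rotate

lemma mem_rotations {l u : List α} : u ∈ rotations l ↔ l ~r u := by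
  refine ⟨fun h => ?_, fun ⟨k, hk⟩ => ?_⟩
  · obtain ⟨k, -, rfl⟩ := mem_image.mp h
    exact ⟨k, rfl⟩
  · refine mem_image.mpr
      ⟨k % rotationPeriod l, mem_range.mpr (Nat.mod_lt _ (rotationPeriod_pos l)), ?_⟩
    rw [← hk, ← iterate_rotate_one, ← iterate_rotate_one]
    exact iterate_mod_minimalPeriod_eq

lemma card_rotations (l : List α) : #(rotations l) = rotationPeriod l := by
  rw [rotations, card_image_of_injOn, card_range]
  intro i hi j hj hij
  refine iterate_injOn_Iio_minimalPeriod (by simpa [rotationPeriod] using hi)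
    (by simpa [rotationPeriod] using hj) ?_
  simpa only [iterate_rotate_one] using hij

lemma card_eq_sum_rotationPeriod {S R : Finset (List α)}
    (hRS : ∀ t ∈ R, ∀ u, t ~r u → u ∈ S) (hcover : ∀ u ∈ S, ∃ t ∈ R, t ~r u)
    (hdistinct : ∀ t ∈ R, ∀ u ∈ R, t ~r u → t = u) :
    #S = ∑ t ∈ R, rotationPeriod t := by
  have hS : S = R.biUnion rotations := by
    ext u
    simp only [mem_biUnion, mem_rotations]
    exact ⟨hcover u, fun ⟨t, ht, htu⟩ => hRS t ht u htu⟩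
  rw [hS, card_biUnion, sum_congr rfl fun t _ => card_rotations t]
  intro t ht t' ht' hne
  refine disjoint_left.mpr fun u hu hu' => hne (hdistinct t ht t' ht' ?_)
  exact (mem_rotations.mp hu).trans (mem_rotations.mp hu').symm

end Rotation

lemma isPeriodOf_iff_s12 {t : List ℕ} {p : ℕ} :
    IsPeriodOf t p ↔ 1 ≤ p ∧ p ∣ t.length ∧ t.rotate p = t := by
  refine and_congr_right fun _ => and_congr_right fun hdvd =>
    ⟨fun h => ?_, fun h => eq_flatten_replicate_of_rotate_eq h hdvd⟩
  rcases Nat.eq_zero_or_pos t.length with h0 | hpos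
  · simp [List.length_eq_zero_iff.mp h0]
  · have hc : (t.take p).length = p := List.length_take_of_le (Nat.le_of_dvd hpos hdvd)
    have := rotate_flatten_replicate (t.length / p) (t.take p)
    rwa [hc, ← h] at this

lemma isPeriodOf_rotationPeriod (t : List ℕ) : IsPeriodOf t (rotationPeriod t) :=
  isPeriodOf_iff_s12.mpr
    ⟨rotationPeriod_pos t, rotationPeriod_dvd_length t, rotate_rotationPeriod t⟩

lemma period_eq_rotationPeriod (t : List ℕ) : period t = rotationPeriod t := by
  have hmem : IsPeriodOf t (period t) :=
    Nat.sInf_mem (s := {p | IsPeriodOf t p}) ⟨_, isPeriodOf_rotationPeriod t⟩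
  obtain ⟨hpos, -, hrot⟩ := isPeriodOf_iff_s12.mp hmem
  exact le_antisymm (Nat.sInf_le (isPeriodOf_rotationPeriod t)) (rotationPeriod_le hpos hrot)

lemma IsPeriodOf.length_dvd_mul {t : List ℕ} {p : ℕ} (h : IsPeriodOf t p) :
    t.length ∣ (t.sum + t.length) * p := by
  obtain ⟨hp, ⟨q, hq⟩, ht⟩ := h
  have hsum : t.sum = q * (t.take p).sum := by
    conv_lhs => rw [ht]
    rw [List.sum_flatten, List.map_replicate, List.sum_replicate, smul_eq_mul, hq,
      Nat.mul_div_cancel_left _ hp]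
  exact ⟨(t.take p).sum + p, by rw [hsum, hq]; ring⟩

lemma shiftEquiv_iff_isRotated {t u : List ℕ} (ht : t ≠ []) : ShiftEquiv t u ↔ t ~r u := by
  refine ⟨fun ⟨k, _, hk⟩ => ⟨k, hk.symm⟩, fun ⟨k, hk⟩ => ⟨k % t.length, ?_, ?_⟩⟩
  · exact Nat.mod_lt _ (List.length_pos_iff.mpr ht)
  · rw [List.rotate_mod, hk]

lemma IsIA.of_isRotated {n s : ℕ} {t u : List ℕ} (h : IsIA n s t) (htu : t ~r u) : IsIA n s u :=
  ⟨htu.perm.length_eq ▸ h.1, htu.perm.sum_eq ▸ h.2⟩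

lemma IsIA.ne_nil {n s : ℕ} {t : List ℕ} (h : IsIA n s t) (hs : 0 < s) : t ≠ [] :=
  List.length_pos_iff.mp (h.1 ▸ hs)

lemma IsIA.period_dvd {n s : ℕ} {t : List ℕ} (h : IsIA n s t) : period t ∣ s :=
  h.1 ▸ period_eq_rotationPeriod t ▸ rotationPeriod_dvd_length t

lemma IsIA.dvd_mul_period {n s : ℕ} {t : List ℕ} (h : IsIA n s t) (hsn : s ≤ n) :
    s ∣ n * period t := by
  have := (isPeriodOf_rotationPeriod t).length_dvd_mul
  rwa [h.1, h.2, Nat.sub_add_cancel hsn, ← period_eq_rotationPeriod] at this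

lemma sum_period_eq_choose {n s : ℕ} (hs : 0 < s) (hsn : s ≤ n) {R : Finset (List ℕ)}
    (hIA : ∀ t ∈ R, IsIA n s t)
    (hdistinct : ∀ t ∈ R, ∀ u ∈ R, ShiftEquiv t u → t = u)
    (hcomplete : ∀ u, IsIA n s u → ∃ t ∈ R, ShiftEquiv t u) :
    ∑ t ∈ R, period t = (n - 1).choose (s - 1) := by
  have hshift : ∀ t ∈ R, ∀ {u}, ShiftEquiv t u ↔ t ~r u := fun t ht =>
    shiftEquiv_iff_isRotated ((hIA t ht).ne_nil hs)
  rw [← Nat.choose_symm_of_eq_add (by omega : n - 1 = (n - s) + (s - 1)),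
    show n - 1 = s + (n - s) - 1 by omega, ← card_listsWithSum]
  simp only [period_eq_rotationPeriod]
  refine (card_eq_sum_rotationPeriod (fun t ht u htu => ?_) (fun u hu => ?_)
    (fun t ht u hu htu => ?_)).symm
  · exact mem_listsWithSum.mpr ((hIA t ht).of_isRotated htu)
  · obtain ⟨t, ht, htu⟩ := hcomplete u (mem_listsWithSum.mp hu)
    exact ⟨t, ht, (hshift t ht).mp htu⟩
  · exact hdistinct t ht u hu ((hshift t ht).mpr htu)

theorem stmt12_general (n s : ℕ) (hs1 : 1 ≤ s) (hsn : s ≤ n)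
    (R : Finset (List ℕ))
    (hIA : ∀ t ∈ R, IsIA n s t)
    (hdistinct : ∀ t ∈ R, ∀ u ∈ R, ShiftEquiv t u → t = u)
    (hcomplete : ∀ u, IsIA n s u → ∃ t ∈ R, ShiftEquiv t u) :
    Nat.choose n s = ∑ t ∈ R, n * period t / s ∧
    Nat.choose n s =
      n * (R.filter (fun t => period t = s)).card
        + ∑ t ∈ R.filter (fun t => period t < s), n * period t / s := by
  have hchoose : n * (n - 1).choose (s - 1) = n.choose s * s := by
    have := Nat.add_one_mul_choose_eq (n - 1) (s - 1)
    rwa [Nat.sub_add_cancel (by omega), Nat.sub_add_cancel hs1] at this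
  have hstride : n.choose s = ∑ t ∈ R, n * period t / s := by
    rw [← Nat.sum_div fun t ht => (hIA t ht).dvd_mul_period hsn, ← mul_sum,
      sum_period_eq_choose hs1 hsn hIA hdistinct hcomplete, hchoose, Nat.mul_div_cancel _ hs1]
  refine ⟨hstride, ?_⟩
  rw [hstride, ← sum_filter_add_sum_filter_not R (fun t => period t = s)]
  congr 1
  · rw [sum_congr rfl fun t ht => by rw [(mem_filter.mp ht).2, Nat.mul_div_cancel _ hs1],
      sum_const, smul_eq_mul, mul_comm]
  · refine sum_congr (filter_congr fun t ht => ?_) fun _ _ => rfl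
    have := Nat.le_of_dvd hs1 (hIA t ht).period_dvd
    omega

/-- Let `R` contain exactly one representative of each
`≈`-equivalence class of size-`s` increment arrays.  Then the binomial
coefficient decomposes as the sum of strides over the classes:
`C(n,s) = Σ_{t ∈ R} n·π(t)/s`; equivalently
`C(n,s) = n·|A(n,s)| + Σ_{t ∈ P(n,s)} ϖ(t)` where `A(n,s)` are the aperiodic
representatives (`π(t) = s`), `P(n,s)` the periodic ones (`π(t) < s`), and
`ϖ(t) = n·π(t)/s`. -/
theorem stmt12 (n s : ℕ) (hn : 1 ≤ n) (hs1 : 1 ≤ s) (hsn : s ≤ n)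
    (R : Finset (List ℕ))
    (hIA : ∀ t ∈ R, IsIA n s t)
    (hdistinct : ∀ t ∈ R, ∀ u ∈ R, ShiftEquiv t u → t = u)
    (hcomplete : ∀ u, IsIA n s u → ∃ t ∈ R, ShiftEquiv t u) :
    Nat.choose n s = ∑ t ∈ R, n * period t / s ∧
    Nat.choose n s =
      n * (R.filter (fun t => period t = s)).card
        + ∑ t ∈ R.filter (fun t => period t < s), n * period t / s :=
  stmt12_general n s hs1 hsn R hIA hdistinct hcomplete

end NDCA
end

section
/- Let n ≥ 1 and let d_1, …, d_K be positive integers with each d_j ≤ n; set h_j = Σ_{i<j} d_i (so h_1 = 0) and D = Σ_{j=1}^{K} d_j. For each agent x ∈ {1, …, n}, the number of indices j ∈ {1, …, K} satisfying the designation test (x − 1 − h_j) mod n < d_j lies between ⌊D/n⌋ and ⌈D/n⌉; in particular, the counts for any two agents differ by at most 1. -/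
namespace NDCA

/-- The number of indices `j ∈ {1,…,K}` for which agent `x` passes the
designation test `(x - 1 - h_j) mod n < d_j`, with `h_j = Σ_{i<j} d_i`. -/
def desigCount14 (n K : ℕ) (d : ℕ → ℕ) (x : ℕ) : ℕ :=
  ((Finset.Icc 1 K).filter (fun j =>
    ((x : ℤ) - 1 - (∑ i ∈ Finset.Ico 1 j, (d i : ℤ))) % (n : ℤ)
      < (d j : ℤ))).card

/-! Index `j` designates agent `x` exactly when some `m ∈ [h_j, h_j + d_j)` has
`m ≡ x - 1 (mod n)`, and since `d_j ≤ n` there is at most one such `m`. The windows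
`[h_j, h_j + d_j)` tile `[0, D)`, so the count of agent `x` is the number of `m < D` with
`m ≡ x - 1 (mod n)`, which is `⌊D/n⌋` or `⌊D/n⌋ + 1`. -/

open Finset

theorem count_add_modEq_eq_ite {n : ℕ} (hn : 0 < n) (H v : ℤ) {e : ℕ} (he : e ≤ n) :
    Nat.count (fun k : ℕ => H + k ≡ v [ZMOD n]) e = if (v - H) % n < e then 1 else 0 := by
  have hr : 0 ≤ (v - H) % n := Int.emod_nonneg _ (by omega)
  have hmodEq : ∀ k < e, H + k ≡ v [ZMOD n] ↔ (k : ℤ) = (v - H) % n := by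
    intro k hk
    calc H + k ≡ v [ZMOD n] ↔ k ≡ v - H [ZMOD n] := by simp only [Int.modEq_iff_dvd, sub_sub]
      _ ↔ (k : ℤ) = (v - H) % n := by
        rw [Int.ModEq, Int.emod_eq_of_lt (Nat.cast_nonneg k) (by omega)]
  rw [Nat.count_eq_card_filter_range]
  split_ifs with hlt
  · rw [card_eq_one]
    refine ⟨((v - H) % n).toNat, ?_⟩
    ext k
    simp only [mem_filter, mem_range, mem_singleton]
    constructor
    · rintro ⟨hk, h⟩
      have := (hmodEq k hk).mp h
      omega
    · rintro rfl
      have hk : ((v - H) % n).toNat < e := by omega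
      exact ⟨hk, (hmodEq _ hk).mpr (by omega)⟩
  · rw [card_eq_zero, filter_eq_empty_iff]
    intro k hk h
    have hk' := mem_range.mp hk
    have := (hmodEq k hk').mp h
    omega

theorem count_sum_Icc_eq_sum_count (p : ℕ → Prop) [DecidablePred p] (d : ℕ → ℕ) (K : ℕ) :
    Nat.count p (∑ j ∈ Icc 1 K, d j) =
      ∑ j ∈ Icc 1 K, Nat.count (fun k => p (∑ i ∈ Ico 1 j, d i + k)) (d j) := by
  induction K with
  | zero => simp
  | succ K ih =>
    rw [sum_Icc_succ_top (by omega), sum_Icc_succ_top (by omega), Nat.count_add, ih]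
    rfl

theorem div_le_count_modEq (D n v : ℕ) : D / n ≤ Nat.count (· ≡ v [MOD n]) D := by
  rcases n.eq_zero_or_pos with rfl | hn
  · simp
  · rw [Nat.count_modEq_card _ hn]
    exact Nat.le_add_right _ _

theorem count_modEq_le_ceil {n : ℕ} (hn : 0 < n) (D v : ℕ) :
    Nat.count (· ≡ v [MOD n]) D ≤ (D + n - 1) / n := by
  rw [Nat.count_modEq_card _ hn]
  split_ifs with h
  · rw [Nat.le_div_iff_mul_le hn, add_mul, one_mul]
    have := Nat.div_add_mod' D n
    omega
  · exact Nat.div_le_div_right (by omega)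

theorem desigCount14_eq_count {n K : ℕ} (hn : 0 < n) {d : ℕ → ℕ} (hd : ∀ j ∈ Icc 1 K, d j ≤ n)
    {x : ℕ} (hx : 1 ≤ x) :
    desigCount14 n K d x = Nat.count (· ≡ x - 1 [MOD n]) (∑ j ∈ Icc 1 K, d j) := by
  simp_rw [← Int.natCast_modEq_iff, Nat.cast_sub hx, Nat.cast_one]
  rw [count_sum_Icc_eq_sum_count, desigCount14, card_filter]
  refine sum_congr rfl fun j hj => ?_
  simp only [Nat.cast_add, Nat.cast_sum]
  rw [count_add_modEq_eq_ite hn _ _ (hd j hj), sub_sub]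

theorem stmt14_general (n K : ℕ) (d : ℕ → ℕ)
    (hd : ∀ j, 1 ≤ j → j ≤ K → 1 ≤ d j ∧ d j ≤ n)
    (x : ℕ) (hx : x ∈ Finset.Icc 1 n) :
    (∑ j ∈ Finset.Icc 1 K, d j) / n ≤ desigCount14 n K d x ∧
    desigCount14 n K d x ≤ ((∑ j ∈ Finset.Icc 1 K, d j) + n - 1) / n ∧
    ∀ y ∈ Finset.Icc 1 n,
      desigCount14 n K d x ≤ desigCount14 n K d y + 1 := by
  have hn : 0 < n := by grind
  have hd' : ∀ j ∈ Icc 1 K, d j ≤ n := fun j hj => (hd j (mem_Icc.mp hj).1 (mem_Icc.mp hj).2).2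
  have hcount : ∀ z ∈ Icc 1 n, desigCount14 n K d z =
      Nat.count (· ≡ z - 1 [MOD n]) (∑ j ∈ Icc 1 K, d j) :=
    fun z hz => desigCount14_eq_count hn hd' (mem_Icc.mp hz).1
  set D := ∑ j ∈ Icc 1 K, d j
  rw [hcount x hx]
  refine ⟨div_le_count_modEq D n _, count_modEq_le_ceil hn D _, fun y hy => ?_⟩
  calc Nat.count (· ≡ x - 1 [MOD n]) D ≤ (D + n - 1) / n := count_modEq_le_ceil hn D _
    _ ≤ (D + n) / n := Nat.div_le_div_right (by omega)
    _ = D / n + 1 := Nat.add_div_right D hn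
    _ ≤ desigCount14 n K d y + 1 := by
      rw [hcount y hy]
      exact Nat.add_le_add_right (div_le_count_modEq D n _) 1

/-- Let `n ≥ 1` and positive window lengths
`d_1, …, d_K ≤ n` with cumulative offsets `h_j = Σ_{i<j} d_i` and total
`D = Σ_j d_j`.  For each agent `x ∈ {1,…,n}` the number of indices `j`
satisfying the designation test `(x - 1 - h_j) mod n < d_j` lies between
`⌊D/n⌋` and `⌈D/n⌉`; in particular, the counts of any two agents differ by
at most 1. -/
theorem stmt14 (n K : ℕ) (hn : 1 ≤ n) (d : ℕ → ℕ)
    (hd : ∀ j, 1 ≤ j → j ≤ K → 1 ≤ d j ∧ d j ≤ n)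
    (x : ℕ) (hx : x ∈ Finset.Icc 1 n) :
    (∑ j ∈ Finset.Icc 1 K, d j) / n ≤ desigCount14 n K d x ∧
    desigCount14 n K d x ≤ ((∑ j ∈ Finset.Icc 1 K, d j) + n - 1) / n ∧
    ∀ y ∈ Finset.Icc 1 n,
      desigCount14 n K d x ≤ desigCount14 n K d y + 1 :=
  stmt14_general n K d hd x hx

end NDCA
end
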